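/- arXiv:1901.02936 — 2 statements merged into one kernel-verified Lean document; each statement's English description precedes it below -/
import Mathlib

section
/- Let m ≥ 2, let S be a nonempty proper subset of {1,…,m}, and let σ_e² > 0 be fixed. Suppose Γ assigns to every positive definite m×m real matrix Σ a symmetric m×m real matrix Γ(Σ) such that: (i) Γ(Σ) is positive semidefinite and Σ − Γ(Σ) is positive semidefinite; (ii) for every u ∈ ℝᵐ, uᵀΓ(Σ)u = uᵀΣu if and only if u_{Sᶜ} = 0; and (iii) whenever two positive definite matrices Σ and Σ′ agree on all entries (i,j) except possibly those with both i ∈ Sᶜ and j ∈ Sᶜ, one has Γ(Σ) = Γ(Σ′). Then for every positive definite Σ, Γ(Σ) is the block matrix with blocks Γ(Σ)_{S,S} = Σ_{S,S}, Γ(Σ)_{S,Sᶜ} = Σ_{S,Sᶜ}, Γ(Σ)_{Sᶜ,S} = Σ_{Sᶜ,S}, and Γ(Σ)_{Sᶜ,Sᶜ} = Σ_{Sᶜ,S} Σ_{S,S}⁻¹ Σ_{S,Sᶜ}. Equivalently, for every u ∈ ℝᵐ, uᵀΓ(Σ)u = uᵀΣu − u_{Sᶜ}ᵀ Σ_{Sᶜ|S}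 u_{Sᶜ}. -/
open Matrix

/-- The submatrix of `A` with rows indexed by `S` and columns indexed by `T`. -/
def blk {m : ℕ} (A : Matrix (Fin m) (Fin m) ℝ) (S T : Finset (Fin m)) :
    Matrix ↥S ↥T ℝ :=
  Matrix.of fun i j => A i.val j.val

/-- The subvector of `u` with coordinates indexed by `S`. -/
def subvec {m : ℕ} (u : Fin m → ℝ) (S : Finset (Fin m)) : ↥S → ℝ :=
  fun i => u i.val

/-- The Schur complement `Σ_{Sᶜ|S} = Σ_{Sᶜ,Sᶜ} − Σ_{Sᶜ,S} Σ_{S,S}⁻¹ Σ_{S,Sᶜ}`. -/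
noncomputable def schurCompl {m : ℕ} (A : Matrix (Fin m) (Fin m) ℝ) (S : Finset (Fin m)) :
    Matrix ↥Sᶜ ↥Sᶜ ℝ :=
  blk A Sᶜ Sᶜ - blk A Sᶜ S * (blk A S S)⁻¹ * blk A S Sᶜ

/-
Since `Σ - Γ(Σ)` is positive semidefinite and, by (ii), vanishes at the diagonal entries indexed
by `S`, it vanishes on every row and column indexed by `S`: `Γ(Σ)` agrees with `Σ` outside its
`Sᶜ × Sᶜ` block `D`. Let `N = Σ_{Sᶜ,S} Σ_{S,S}⁻¹ Σ_{S,Sᶜ}`. Positivity of `Γ(Σ)` gives `N ≤ D`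
(Schur complement). Conversely, replacing the `Sᶜ × Sᶜ` block of `Σ` by `N + ε • 1` gives a
positive definite matrix with the same `Γ` by (iii), so (i) gives `D ≤ N + ε • 1` for every
`ε > 0`, whence `D = N`.
-/

open scoped MatrixOrder ComplexOrder

namespace Matrix

variable {n : Type*} [Fintype n]

theorem PosSemidef.apply_eq_zero_of_diag_eq_zero {𝕜 : Type*} [RCLike 𝕜] [DecidableEq n]
    {M : Matrix n n 𝕜} (hM : M.PosSemidef) {j : n} (hj : M j j = 0) (i : n) : M i j = 0 := by
  have hcol : M *ᵥ Pi.single j 1 = 0 :=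
    (hM.dotProduct_mulVec_zero_iff _).1 (by simpa [mulVec_single_one] using hj)
  simpa [mulVec_single_one] using congrFun hcol i

theorem PosSemidef.apply_eq_of_diag_eq {𝕜 : Type*} [RCLike 𝕜] [DecidableEq n]
    {M G : Matrix n n 𝕜} (h : (M - G).PosSemidef) {S : Finset n}
    (hdiag : ∀ j ∈ S, G j j = M j j) {i j : n} (hij : i ∈ S ∨ j ∈ S) : G i j = M i j := by
  have hcol : ∀ k ∈ S, ∀ l, (M - G) l k = 0 := fun k hk =>
    h.apply_eq_zero_of_diag_eq_zero (by simp [hdiag k hk])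
  rcases hij with hi | hj
  · have := hcol i hi j
    rw [← h.isHermitian.apply, star_eq_zero, sub_apply, sub_eq_zero] at this
    exact this.symm
  · exact (sub_eq_zero.1 (hcol j hj i)).symm

theorem PosDef.posDef_fromBlocks₁₁ {𝕜 m : Type*} [RCLike 𝕜] [Fintype m] [DecidableEq m]
    [DecidableEq n] {A : Matrix m m 𝕜} (B : Matrix m n 𝕜) {D : Matrix n n 𝕜} (hA : A.PosDef)
    [Invertible A] (hD : (D - Bᴴ * A⁻¹ * B).PosDef) : (fromBlocks A B Bᴴ D).PosDef := by
  rw [((hA.fromBlocks₁₁ B D).2 hD.posSemidef).posDef_iff_det_ne_zero, det_fromBlocks₁₁,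
    invOf_eq_nonsing_inv]
  exact mul_ne_zero hA.det_pos.ne' hD.det_pos.ne'

theorem le_of_forall_pos_le_add_smul_one [DecidableEq n] {A B : Matrix n n ℝ}
    (h : ∀ ε : ℝ, 0 < ε → A ≤ B + ε • 1) : A ≤ B := by
  have hherm : (B - A).IsHermitian := by
    have := (h 1 one_pos).isHermitian.sub isHermitian_one
    rwa [one_smul, add_sub_right_comm, add_sub_cancel_right] at this
  refine PosSemidef.of_dotProduct_mulVec_nonneg hherm fun x => ?_
  set q := star x ⬝ᵥ (B - A) *ᵥ x
  set c := star x ⬝ᵥ x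
  have hc : 0 ≤ c := dotProduct_star_self_nonneg x
  refine le_of_forall_pos_le_add fun δ hδ => ?_
  have hε : 0 < δ / (c + 1) := by positivity
  have hq : 0 ≤ q + δ / (c + 1) * c := by
    have := (h _ hε).dotProduct_mulVec_nonneg x
    rwa [add_sub_right_comm, add_mulVec, smul_mulVec, one_mulVec, dotProduct_add,
      dotProduct_smul, smul_eq_mul] at this
  have : δ / (c + 1) * c ≤ δ := by
    rw [div_mul_eq_mul_div, div_le_iff₀ (by positivity)]
    nlinarith
  linarith

end Matrix

section Blocks

variable {m : ℕ} (S : Finset (Fin m))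

def sumComplEquiv : (↥S ⊕ ↥Sᶜ) ≃ Fin m :=
  (Equiv.sumCongr (Equiv.refl ↥S) (Equiv.subtypeEquivRight fun _ => Finset.mem_compl)).trans
    (Equiv.sumCompl (· ∈ S))

theorem submatrix_sumComplEquiv (M : Matrix (Fin m) (Fin m) ℝ) :
    M.submatrix (sumComplEquiv S) (sumComplEquiv S) =
      fromBlocks (blk M S S) (blk M S Sᶜ) (blk M Sᶜ S) (blk M Sᶜ Sᶜ) := by
  ext (i | i) (j | j) <;> rfl

theorem dotProduct_mulVec_eq_blk (M : Matrix (Fin m) (Fin m) ℝ) (u : Fin m → ℝ) :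
    u ⬝ᵥ M *ᵥ u =
      subvec u S ⬝ᵥ blk M S S *ᵥ subvec u S + subvec u S ⬝ᵥ blk M S Sᶜ *ᵥ subvec u Sᶜ +
        (subvec u Sᶜ ⬝ᵥ blk M Sᶜ S *ᵥ subvec u S +
          subvec u Sᶜ ⬝ᵥ blk M Sᶜ Sᶜ *ᵥ subvec u Sᶜ) := by
  set e := sumComplEquiv S
  have hreindex : u ⬝ᵥ M *ᵥ u = (u ∘ e) ⬝ᵥ M.submatrix e e *ᵥ (u ∘ e) := by
    rw [submatrix_mulVec_equiv, Function.comp_assoc, e.self_comp_symm, Function.comp_id]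
    exact (Equiv.sum_comp e fun j => u j * (M *ᵥ u) j).symm
  have hu : u ∘ e = Sum.elim (subvec u S) (subvec u Sᶜ) := by
    ext (i | i) <;> rfl
  rw [hreindex, submatrix_sumComplEquiv, fromBlocks_mulVec, hu, sumElim_dotProduct_sumElim]
  simp only [Sum.elim_comp_inl, Sum.elim_comp_inr, dotProduct_add]

theorem Matrix.IsHermitian.blk_conjTranspose {M : Matrix (Fin m) (Fin m) ℝ}
    (hM : M.IsHermitian) (T : Finset (Fin m)) : (blk M S T)ᴴ = blk M T S := by
  ext i j
  exact hM.apply i j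

def updateComplBlk (M : Matrix (Fin m) (Fin m) ℝ) (D : Matrix ↥Sᶜ ↥Sᶜ ℝ) :
    Matrix (Fin m) (Fin m) ℝ :=
  Matrix.of fun i j => if h : i ∈ Sᶜ ∧ j ∈ Sᶜ then D ⟨i, h.1⟩ ⟨j, h.2⟩ else M i j

variable {S}

theorem updateComplBlk_apply_of_mem (M : Matrix (Fin m) (Fin m) ℝ) (D : Matrix ↥Sᶜ ↥Sᶜ ℝ)
    {i j : Fin m} (hij : i ∈ S ∨ j ∈ S) : updateComplBlk S M D i j = M i j := by
  rw [updateComplBlk, of_apply, dif_neg]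
  simpa only [Finset.mem_compl, not_and_or, not_not] using hij

theorem blk_updateComplBlk_compl (M : Matrix (Fin m) (Fin m) ℝ) (D : Matrix ↥Sᶜ ↥Sᶜ ℝ) :
    blk (updateComplBlk S M D) Sᶜ Sᶜ = D := by
  ext i j
  rw [blk, of_apply, updateComplBlk, of_apply, dif_pos ⟨i.2, j.2⟩]

theorem submatrix_updateComplBlk (M : Matrix (Fin m) (Fin m) ℝ) (D : Matrix ↥Sᶜ ↥Sᶜ ℝ) :
    (updateComplBlk S M D).submatrix (sumComplEquiv S) (sumComplEquiv S) =
      fromBlocks (blk M S S) (blk M S Sᶜ) (blk M Sᶜ S) D := by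
  rw [submatrix_sumComplEquiv, blk_updateComplBlk_compl]
  congr 1 <;> ext i j <;> exact updateComplBlk_apply_of_mem M D (by simp)

theorem eq_updateComplBlk {M G : Matrix (Fin m) (Fin m) ℝ}
    (h : ∀ i j, i ∈ S ∨ j ∈ S → G i j = M i j) : G = updateComplBlk S M (blk G Sᶜ Sᶜ) := by
  ext i j
  by_cases hij : i ∈ S ∨ j ∈ S
  · rw [updateComplBlk_apply_of_mem _ _ hij, h i j hij]
  · simp only [not_or] at hij
    simp [updateComplBlk, blk, hij]

theorem Matrix.PosDef.blk_self {M : Matrix (Fin m) (Fin m) ℝ} (hM : M.PosDef) :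
    (blk M S S).PosDef :=
  hM.submatrix Subtype.val_injective

theorem Matrix.PosDef.posSemidef_updateComplBlk_iff {M : Matrix (Fin m) (Fin m) ℝ}
    (hM : M.PosDef) {D : Matrix ↥Sᶜ ↥Sᶜ ℝ} :
    (updateComplBlk S M D).PosSemidef ↔
      (D - blk M Sᶜ S * (blk M S S)⁻¹ * blk M S Sᶜ).PosSemidef := by
  have : Invertible (blk M S S) := hM.blk_self.isUnit.invertible
  rw [← posSemidef_submatrix_equiv (sumComplEquiv S), submatrix_updateComplBlk,
    ← hM.isHermitian.blk_conjTranspose S Sᶜ, hM.blk_self.fromBlocks₁₁]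

theorem Matrix.PosDef.updateComplBlk {M : Matrix (Fin m) (Fin m) ℝ} (hM : M.PosDef)
    {D : Matrix ↥Sᶜ ↥Sᶜ ℝ}
    (hD : (D - blk M Sᶜ S * (blk M S S)⁻¹ * blk M S Sᶜ).PosDef) :
    (updateComplBlk S M D).PosDef := by
  have : Invertible (blk M S S) := hM.blk_self.isUnit.invertible
  rw [← hM.isHermitian.blk_conjTranspose S Sᶜ] at hD
  have hblocks := hM.blk_self.posDef_fromBlocks₁₁ _ hD
  rw [hM.isHermitian.blk_conjTranspose, ← submatrix_updateComplBlk] at hblocks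
  simpa using hblocks.submatrix (sumComplEquiv S).symm.injective

end Blocks

theorem stmt_0_general {m : ℕ}
    (S : Finset (Fin m))
    (Γ : Matrix (Fin m) (Fin m) ℝ → Matrix (Fin m) (Fin m) ℝ)
    (hi : ∀ Sig : Matrix (Fin m) (Fin m) ℝ, Sig.PosDef →
      (Γ Sig).PosSemidef ∧ (Sig - Γ Sig).PosSemidef)
    (hii : ∀ Sig : Matrix (Fin m) (Fin m) ℝ, Sig.PosDef → ∀ u : Fin m → ℝ,
      u ⬝ᵥ Γ Sig *ᵥ u = u ⬝ᵥ Sig *ᵥ u ↔ ∀ i, i ∉ S → u i = 0)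
    (hiii : ∀ Sig Sig' : Matrix (Fin m) (Fin m) ℝ, Sig.PosDef → Sig'.PosDef →
      (∀ i j : Fin m, (i ∈ S ∨ j ∈ S) → Sig i j = Sig' i j) → Γ Sig = Γ Sig') :
    ∀ Sig : Matrix (Fin m) (Fin m) ℝ, Sig.PosDef →
      blk (Γ Sig) S S = blk Sig S S ∧
      blk (Γ Sig) S Sᶜ = blk Sig S Sᶜ ∧
      blk (Γ Sig) Sᶜ S = blk Sig Sᶜ S ∧
      blk (Γ Sig) Sᶜ Sᶜ = blk Sig Sᶜ S * (blk Sig S S)⁻¹ * blk Sig S Sᶜ ∧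
      ∀ u : Fin m → ℝ,
        u ⬝ᵥ Γ Sig *ᵥ u =
          u ⬝ᵥ Sig *ᵥ u - subvec u Sᶜ ⬝ᵥ schurCompl Sig S *ᵥ subvec u Sᶜ := by
  intro Sig hSig
  obtain ⟨hΓ, hgap⟩ := hi Sig hSig
  have hdiag : ∀ j ∈ S, Γ Sig j j = Sig j j := fun j hj => by
    simpa using (hii Sig hSig (Pi.single j 1)).2 fun i hi =>
      Pi.single_eq_of_ne (ne_of_mem_of_not_mem hj hi).symm _
  have hagree : ∀ i j, i ∈ S ∨ j ∈ S → Γ Sig i j = Sig i j := fun _ _ =>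
    hgap.apply_eq_of_diag_eq hdiag
  have hSS : blk (Γ Sig) S S = blk Sig S S := by ext i j; exact hagree _ _ (.inl i.2)
  have hSSc : blk (Γ Sig) S Sᶜ = blk Sig S Sᶜ := by ext i j; exact hagree _ _ (.inl i.2)
  have hScS : blk (Γ Sig) Sᶜ S = blk Sig Sᶜ S := by ext i j; exact hagree _ _ (.inr j.2)
  have hD : blk (Γ Sig) Sᶜ Sᶜ = blk Sig Sᶜ S * (blk Sig S S)⁻¹ * blk Sig S Sᶜ := by
    set N := blk Sig Sᶜ S * (blk Sig S S)⁻¹ * blk Sig S Sᶜ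
    have hlow : N ≤ blk (Γ Sig) Sᶜ Sᶜ :=
      hSig.posSemidef_updateComplBlk_iff.1 (eq_updateComplBlk hagree ▸ hΓ)
    have hup : ∀ ε : ℝ, 0 < ε → blk (Γ Sig) Sᶜ Sᶜ ≤ N + ε • 1 := fun ε hε => by
      have hSigε : (updateComplBlk S Sig (N + ε • 1)).PosDef :=
        hSig.updateComplBlk (by simpa [N] using PosDef.one.smul hε)
      have hgapε := (hi _ hSigε).2
      rw [← hiii Sig _ hSig hSigε fun i j h => (updateComplBlk_apply_of_mem Sig _ h).symm]
        at hgapε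
      rw [le_iff, ← blk_updateComplBlk_compl Sig (N + ε • 1)]
      exact hgapε.submatrix Subtype.val
    exact le_antisymm (le_of_forall_pos_le_add_smul_one hup) hlow
  refine ⟨hSS, hSSc, hScS, hD, fun u => ?_⟩
  rw [dotProduct_mulVec_eq_blk S (Γ Sig), dotProduct_mulVec_eq_blk S Sig, hSS, hSSc, hScS, hD,
    schurCompl, sub_mulVec, dotProduct_sub]
  ring

/-- Proposition 1: axiomatic characterization of partitioned heritability.  If `Γ` assigns to
every positive definite matrix `Sig` a symmetric matrix `Γ Sig` satisfying
(i) `0 ⪯ Γ Sig ⪯ Sig`, (ii) the quadratic forms of `Γ Sig` and `Sig` agree at `u` iff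
`u_{Sᶜ} = 0`, and (iii) `Γ Sig` does not depend on the `Sᶜ × Sᶜ` entries of `Sig`, then
`Γ Sig` has blocks `Sig_{S,S}`, `Sig_{S,Sᶜ}`, `Sig_{Sᶜ,S}` and
`Sig_{Sᶜ,S} Sig_{S,S}⁻¹ Sig_{S,Sᶜ}`; equivalently its quadratic form is
`uᵀ Sig u − u_{Sᶜ}ᵀ Sig_{Sᶜ|S} u_{Sᶜ}`. -/
theorem stmt_0 {m : ℕ} (hm : 2 ≤ m)
    (S : Finset (Fin m)) (hS : S.Nonempty) (hSproper : S ≠ Finset.univ)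
    (σe2 : ℝ) (hσe2 : 0 < σe2)
    (Γ : Matrix (Fin m) (Fin m) ℝ → Matrix (Fin m) (Fin m) ℝ)
    (hsym : ∀ Sig : Matrix (Fin m) (Fin m) ℝ, Sig.PosDef → (Γ Sig).IsSymm)
    (hi : ∀ Sig : Matrix (Fin m) (Fin m) ℝ, Sig.PosDef →
      (Γ Sig).PosSemidef ∧ (Sig - Γ Sig).PosSemidef)
    (hii : ∀ Sig : Matrix (Fin m) (Fin m) ℝ, Sig.PosDef → ∀ u : Fin m → ℝ,
      u ⬝ᵥ Γ Sig *ᵥ u = u ⬝ᵥ Sig *ᵥ u ↔ ∀ i, i ∉ S → u i = 0)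
    (hiii : ∀ Sig Sig' : Matrix (Fin m) (Fin m) ℝ, Sig.PosDef → Sig'.PosDef →
      (∀ i j : Fin m, (i ∈ S ∨ j ∈ S) → Sig i j = Sig' i j) → Γ Sig = Γ Sig') :
    ∀ Sig : Matrix (Fin m) (Fin m) ℝ, Sig.PosDef →
      blk (Γ Sig) S S = blk Sig S S ∧
      blk (Γ Sig) S Sᶜ = blk Sig S Sᶜ ∧
      blk (Γ Sig) Sᶜ S = blk Sig Sᶜ S ∧
      blk (Γ Sig) Sᶜ Sᶜ = blk Sig Sᶜ S * (blk Sig S S)⁻¹ * blk Sig S Sᶜ ∧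
      ∀ u : Fin m → ℝ,
        u ⬝ᵥ Γ Sig *ᵥ u =
          u ⬝ᵥ Sig *ᵥ u - subvec u Sᶜ ⬝ᵥ schurCompl Sig S *ᵥ subvec u Sᶜ :=
  stmt_0_general S Γ hi hii hiii
end

section
/- Let Σ_S be a p×p real symmetric positive definite matrix, B a p×q real matrix, M a q×q real symmetric positive semidefinite matrix, and β ∈ ℝ^q with βᵀMβ > 0 (in particular β ≠ 0). Set c = (βᵀMβ)/(4‖β‖²) and define the (p+q)×(p+q) block matrix Σ̃ with blocks [[Σ_S, B], [Bᵀ, BᵀΣ_S⁻¹B + (1/2)M + cI]], and the block matrix Γ with blocks [[Σ_S, B], [Bᵀ, BᵀΣ_S⁻¹B + M]]. Then: (a) Σ̃ is positive definite; and (b) for u = (0, β) ∈ ℝ^{p+q}, uᵀΓu − uᵀΣ̃u = (1/4)βᵀMβ > 0, so Σ̃ − Γ is not positive semidefinite. -/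
/-! `Σ̃` is positive definite by the Schur-complement criterion: its complement `½M + cI` is
positive definite because `c > 0`. At `u = (0, β)` both quadratic forms only see the lower-right
blocks, and `c` is chosen so that `c‖β‖² = ¼βᵀMβ`. -/

open Matrix

namespace Matrix

variable {m n R : Type*} [Fintype m] [Fintype n]

theorem PosDef.posDef_fromBlocks₁₁_iff [CommRing R] [PartialOrder R] [StarRing R]
    [StarOrderedRing R] [DecidableEq m] {A : Matrix m m R} (B : Matrix m n R) (D : Matrix n n R)
    (hA : A.PosDef) [Invertible A] :
    (fromBlocks A B Bᴴ D).PosDef ↔ (D - Bᴴ * A⁻¹ * B).PosDef := by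
  rw [posDef_iff_dotProduct_mulVec, posDef_iff_dotProduct_mulVec,
    IsHermitian.fromBlocks₁₁ _ _ hA.1]
  refine and_congr_right fun _ => ⟨fun h y hy => ?_, fun h x hx => ?_⟩
  · have := h (x := -((A⁻¹ * B) *ᵥ y) ⊕ᵥ y) fun h0 =>
      hy (by simpa using congrArg (· ∘ Sum.inr) h0)
    rwa [dotProduct_mulVec, schur_complement_eq₁₁ B D _ _ hA.1, neg_add_cancel, dotProduct_zero,
      zero_add, ← dotProduct_mulVec] at this
  · rw [dotProduct_mulVec, ← Sum.elim_comp_inl_inr x, schur_complement_eq₁₁ B D _ _ hA.1,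
      ← dotProduct_mulVec, ← dotProduct_mulVec (star (x ∘ Sum.inr))]
    by_cases hy : x ∘ Sum.inr = 0
    · have hx' : x ∘ Sum.inl ≠ 0 := fun h0 =>
        hx (by rw [← Sum.elim_comp_inl_inr x, h0, hy]; ext (_ | _) <;> rfl)
      simpa [hy] using hA.dotProduct_mulVec_pos hx'
    · exact add_pos_of_nonneg_of_pos (hA.posSemidef.dotProduct_mulVec_nonneg _) (h hy)

theorem sumElim_zero_dotProduct_fromBlocks_mulVec [NonUnitalNonAssocSemiring R]
    (A : Matrix m m R) (B : Matrix m n R) (C : Matrix n m R) (D : Matrix n n R)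
    (y : n → R) :
    (0 ⊕ᵥ y) ⬝ᵥ fromBlocks A B C D *ᵥ (0 ⊕ᵥ y) = y ⬝ᵥ D *ᵥ y := by
  simp [fromBlocks_mulVec, sumElim_dotProduct_sumElim]

end Matrix

theorem stmt_3_general {p q : ℕ} (SigS : Matrix (Fin p) (Fin p) ℝ)
    (hSigS : SigS.PosDef)
    (B : Matrix (Fin p) (Fin q) ℝ)
    (M : Matrix (Fin q) (Fin q) ℝ) (hM : M.PosSemidef)
    (β : Fin q → ℝ) (hβM : 0 < β ⬝ᵥ M *ᵥ β)
    (c : ℝ) (hc : c = (β ⬝ᵥ M *ᵥ β) / (4 * (β ⬝ᵥ β)))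
    (SigTilde Γ : Matrix (Fin p ⊕ Fin q) (Fin p ⊕ Fin q) ℝ)
    (hSigTilde : SigTilde =
      Matrix.fromBlocks SigS B Bᵀ (Bᵀ * SigS⁻¹ * B + (1 / 2 : ℝ) • M + c • (1 : Matrix (Fin q) (Fin q) ℝ)))
    (hΓ : Γ = Matrix.fromBlocks SigS B Bᵀ (Bᵀ * SigS⁻¹ * B + M))
    (u : Fin p ⊕ Fin q → ℝ) (hu : u = Sum.elim (0 : Fin p → ℝ) β) :
    SigTilde.PosDef ∧
    u ⬝ᵥ Γ *ᵥ u - u ⬝ᵥ SigTilde *ᵥ u = (1 / 4 : ℝ) * (β ⬝ᵥ M *ᵥ β) ∧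
    ¬ (SigTilde - Γ).PosSemidef := by
  subst hSigTilde hΓ hu
  have := hSigS.isUnit.invertible
  have hβ : 0 < β ⬝ᵥ β := by
    refine dotProduct_star_self_pos_iff.mpr fun h0 => ?_
    simp [h0] at hβM
  have hc_pos : 0 < c := hc ▸ by positivity
  have hgap : (0 ⊕ᵥ β) ⬝ᵥ fromBlocks SigS B Bᵀ (Bᵀ * SigS⁻¹ * B + M) *ᵥ (0 ⊕ᵥ β) -
      (0 ⊕ᵥ β) ⬝ᵥ fromBlocks SigS B Bᵀ (Bᵀ * SigS⁻¹ * B + (1 / 2 : ℝ) • M + c • 1) *ᵥ (0 ⊕ᵥ β) =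
      1 / 4 * (β ⬝ᵥ M *ᵥ β) := by
    simp only [sumElim_zero_dotProduct_fromBlocks_mulVec, add_mulVec, smul_mulVec, one_mulVec,
      dotProduct_add, dotProduct_smul, smul_eq_mul, hc]
    field_simp
    ring
  refine ⟨?_, hgap, fun h => ?_⟩
  · rw [← conjTranspose_eq_transpose_of_trivial, hSigS.posDef_fromBlocks₁₁_iff, add_assoc,
      add_sub_cancel_left]
    exact .posSemidef_add (hM.smul (by norm_num)) (PosDef.one.smul hc_pos)
  · have := h.dotProduct_mulVec_nonneg (0 ⊕ᵥ β)
    rw [star_trivial, sub_mulVec, dotProduct_sub] at this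
    linarith

/-- The explicit construction in the contradiction step of Proposition 1: given a surplus
`M` with `βᵀMβ > 0` in the lower-right block, the matrix `Σ̃` below is positive definite,
yet the quadratic form of `Γ` exceeds that of `Σ̃` at `u = (0, β)` by `(1/4)βᵀMβ > 0`,
so `Σ̃ − Γ` is not positive semidefinite. -/
theorem stmt_3 {p q : ℕ} (SigS : Matrix (Fin p) (Fin p) ℝ)
    (hSigSsym : SigS.IsSymm) (hSigS : SigS.PosDef)
    (B : Matrix (Fin p) (Fin q) ℝ)
    (M : Matrix (Fin q) (Fin q) ℝ) (hMsym : M.IsSymm) (hM : M.PosSemidef)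
    (β : Fin q → ℝ) (hβM : 0 < β ⬝ᵥ M *ᵥ β)
    (c : ℝ) (hc : c = (β ⬝ᵥ M *ᵥ β) / (4 * (β ⬝ᵥ β)))
    (SigTilde Γ : Matrix (Fin p ⊕ Fin q) (Fin p ⊕ Fin q) ℝ)
    (hSigTilde : SigTilde =
      Matrix.fromBlocks SigS B Bᵀ (Bᵀ * SigS⁻¹ * B + (1 / 2 : ℝ) • M + c • (1 : Matrix (Fin q) (Fin q) ℝ)))
    (hΓ : Γ = Matrix.fromBlocks SigS B Bᵀ (Bᵀ * SigS⁻¹ * B + M))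
    (u : Fin p ⊕ Fin q → ℝ) (hu : u = Sum.elim (0 : Fin p → ℝ) β) :
    SigTilde.PosDef ∧
    u ⬝ᵥ Γ *ᵥ u - u ⬝ᵥ SigTilde *ᵥ u = (1 / 4 : ℝ) * (β ⬝ᵥ M *ᵥ β) ∧
    ¬ (SigTilde - Γ).PosSemidef :=
  stmt_3_general SigS hSigS B M hM β hβM c hc SigTilde Γ hSigTilde hΓ u hu
end
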